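/- Let R be a Noetherian domain and I ⊆ R a nonzero proper ideal. Define the graded families a_• and b_• by a_i = I^i for all i, and b_i = I for i ≠ 2 with b_2 = I^2. Then for every n ≥ 5, the asymptotic resurgence of a_• with respect to the n-th truncation of b_• is ρ̂(a_•, b_{n,•}) = 1/n. -/

import Mathlib

/-!
For `n ≥ 4`, the `n`-th truncation of `b_•` is `b_{n,k} = I^⌈k/n⌉` for `k ≠ 2` (and `I²` at
`k = 2`): an optimal splitting of `k` uses pieces of size at most `n`, each contributing a single
factor `I`. By Krull's intersection theorem the powers of `I` strictly decrease, so
`a_{st} ⊄ b_{n,rt}` means `st < ⌈rt/n⌉`, i.e. `ns < r`, once `rt ≥ 3`. Hence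
`ρ̂ = sup {s/r : ns < r} = 1/n`, approached by `s/(ns + 1)`.
-/

open Filter

noncomputable section

/-- The asymptotic resurgence
`ρ̂(a_•, b_•) = sup{s/r : s,r ≥ 1, a_{st} ⊄ b_{rt} for all t ≫ 0}` (in `EReal`, so that the
supremum of the empty set is `⊥ = -∞`). -/
def asymptoticResurgence {R : Type*} [CommSemiring R] (a b : ℕ → Ideal R) : EReal :=
  sSup {x : EReal | ∃ s r : ℕ, 1 ≤ s ∧ 1 ≤ r ∧
    (∀ᶠ t in atTop, ¬ (a (s * t) ≤ b (r * t))) ∧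
    x = (((s : ℝ) / (r : ℝ) : ℝ) : EReal)}

/-- The `n`-th truncation of a graded family: `a_{n,k} = a_k` for `k ≤ n`, and
`a_{n,k} = Σ_{i,j>0, i+j=k} a_{n,i}·a_{n,j}` for `k > n`. -/
def truncation {R : Type*} [CommSemiring R] (a : ℕ → Ideal R) (n : ℕ) (k : ℕ) : Ideal R :=
  Nat.strongRecOn k fun k ih =>
    if k ≤ n then a k
    else ⨆ i : Fin k, ⨆ h : 0 < i.val,
      ih i.val i.isLt *
      ih (k - i.val) (Nat.sub_lt (Nat.lt_of_le_of_lt (Nat.zero_le _) i.isLt) h)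

open Topology

theorem Ideal.pow_right_strictAnti_of_isNoetherianRing {R : Type*} [CommRing R] [IsDomain R]
    [IsNoetherianRing R] {I : Ideal R} (hI0 : I ≠ ⊥) (hI1 : I ≠ ⊤) :
    StrictAnti (I ^ · : ℕ → Ideal R) := by
  refine strictAnti_nat_of_succ_lt fun c => lt_of_le_of_ne (Ideal.pow_le_pow_right c.le_succ) ?_
  intro hc
  have hstable : ∀ m, I ^ (c + m) = I ^ c := by
    intro m
    induction m with
    | zero => rfl
    | succ m ih => rw [← add_assoc, pow_succ, ih, ← pow_succ, hc]
  -- A stable power lies in every power of `I`, hence is zero by Krull's intersection theorem.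
  have hbot : I ^ c ≤ ⨅ m : ℕ, I ^ m := le_iInf fun m =>
    (hstable m).symm.le.trans (Ideal.pow_le_pow_right (Nat.le_add_left m c))
  rw [Ideal.iInf_pow_eq_bot_of_isDomain I hI1, le_bot_iff] at hbot
  exact pow_ne_zero c hI0 hbot

theorem truncation_eq {R : Type*} [CommSemiring R] (b : ℕ → Ideal R) (n k : ℕ) :
    truncation b n k = if k ≤ n then b k
      else ⨆ i : Fin k, ⨆ _ : 0 < i.val,
        truncation b n i.val * truncation b n (k - i.val) := by
  rw [truncation, Nat.strongRecOn_eq]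
  rfl

theorem truncation_eq_pow {R : Type*} [CommSemiring R] {b : ℕ → Ideal R} {I : Ideal R}
    {n : ℕ} {e : ℕ → ℕ} (hb : ∀ k, 1 ≤ k → k ≤ n → b k = I ^ e k)
    (hsub : ∀ i j, 1 ≤ i → 1 ≤ j → e (i + j) ≤ e i + e j)
    (hsplit : ∀ k, n < k → ∃ i, 1 ≤ i ∧ i < k ∧ e i + e (k - i) ≤ e k) :
    ∀ k, 1 ≤ k → truncation b n k = I ^ e k := by
  intro k
  induction k using Nat.strongRecOn with
  | _ k ih =>
  intro hk
  rw [truncation_eq]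
  split_ifs with hkn
  · exact hb k hk hkn
  have hprod : ∀ i, 1 ≤ i → i < k →
      truncation b n i * truncation b n (k - i) = I ^ (e i + e (k - i)) := fun i hi hik => by
    rw [ih i hik hi, ih (k - i) (by omega) (by omega), pow_add]
  apply le_antisymm
  · refine iSup_le fun i => iSup_le fun hi => ?_
    rw [hprod i hi i.isLt]
    refine Ideal.pow_le_pow_right ?_
    simpa [Nat.add_sub_cancel' i.isLt.le] using hsub i (k - i) hi (by omega)
  · obtain ⟨i, hi, hik, hle⟩ := hsplit k (by omega)
    calc I ^ e k ≤ I ^ (e i + e (k - i)) := Ideal.pow_le_pow_right hle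
      _ = truncation b n i * truncation b n (k - i) := (hprod i hi hik).symm
      _ ≤ _ := le_iSup₂_of_le (κ := fun i : Fin k => 0 < i.val) ⟨i, hik⟩ hi le_rfl

/-- `⌈k/n⌉`, except at `k = 2`, where it is `2`: the exponent of `I` in the `n`-th truncation
of `I, I², I, I, …`. -/
def truncationExponent (n k : ℕ) : ℕ := if k = 2 then 2 else k ⌈/⌉ n

section truncationExponent

variable {n : ℕ}

theorem truncationExponent_of_le {k : ℕ} (hk : 1 ≤ k) (hkn : k ≤ n) (hk2 : k ≠ 2) :
    truncationExponent n k = 1 := by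
  rw [truncationExponent, if_neg hk2, Nat.ceilDiv_eq_add_pred_div]
  refine le_antisymm ((Nat.div_le_iff_le_mul_add_pred ?_).2 ?_)
    ((Nat.le_div_iff_mul_le ?_).2 ?_) <;> omega

theorem le_mul_truncationExponent (hn : 1 ≤ n) (k : ℕ) : k ≤ n * truncationExponent n k := by
  rw [truncationExponent]
  split_ifs with hk2
  · omega
  · exact (ceilDiv_le_iff_le_mul hn).1 le_rfl

theorem lt_truncationExponent_iff (hn : 1 ≤ n) {k m : ℕ} (hk2 : k ≠ 2) :
    m < truncationExponent n k ↔ n * m < k := by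
  rw [truncationExponent, if_neg hk2, ← not_le, ← not_le, ceilDiv_le_iff_le_mul hn]

theorem truncationExponent_add_le (hn : 1 ≤ n) {i j : ℕ} (hi : 1 ≤ i) (hj : 1 ≤ j) :
    truncationExponent n (i + j) ≤ truncationExponent n i + truncationExponent n j := by
  by_cases h2 : i + j = 2
  · obtain ⟨rfl, rfl⟩ : i = 1 ∧ j = 1 := by omega
    rw [truncationExponent_of_le le_rfl hn (by omega)]
    simp [truncationExponent]
  · rw [← not_lt, lt_truncationExponent_iff hn h2, not_lt, mul_add]
    exact add_le_add (le_mul_truncationExponent hn i) (le_mul_truncationExponent hn j)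

/-- The split `k = 3 + (n - 1)` handles `k = n + 2`; every other `k > n` splits as `n + (k - n)`. -/
theorem exists_truncationExponent_split (hn : 4 ≤ n) {k : ℕ} (hk : n < k) :
    ∃ i, 1 ≤ i ∧ i < k ∧
      truncationExponent n i + truncationExponent n (k - i) ≤ truncationExponent n k := by
  by_cases hk2 : k = n + 2
  · refine ⟨3, by omega, by omega, ?_⟩
    rw [truncationExponent_of_le (by omega) (by omega) (by omega),
      truncationExponent_of_le (by omega) (by omega) (by omega),
      Nat.succ_le_iff, lt_truncationExponent_iff (by omega) (by omega)]
    omega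
  · refine ⟨n, by omega, hk, ?_⟩
    rw [truncationExponent_of_le (by omega) le_rfl (by omega), add_comm, Nat.add_one_le_iff,
      lt_truncationExponent_iff (by omega) (by omega), truncationExponent, if_neg (by omega), Nat.ceilDiv_eq_add_pred_div]
    have := Nat.mul_div_le (k - n + n - 1) n
    omega

end truncationExponent

theorem truncation_eq_pow_truncationExponent {R : Type*} [CommSemiring R] {I : Ideal R}
    {b : ℕ → Ideal R} {n : ℕ} (hn : 4 ≤ n)
    (hB : ∀ i : ℕ, 1 ≤ i → b i = if i = 2 then I ^ 2 else I) (k : ℕ) (hk : 1 ≤ k) :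
    truncation b n k = I ^ truncationExponent n k := by
  refine truncation_eq_pow (fun k hk hkn => ?_) (fun i j hi hj => truncationExponent_add_le
    (by omega) hi hj) (fun k hk => exists_truncationExponent_split hn hk) k hk
  rw [hB k hk]
  split_ifs with hk2
  · rw [hk2, truncationExponent, if_pos rfl]
  · rw [truncationExponent_of_le hk hkn hk2, pow_one]

theorem asymptoticResurgence_eq_inv {R : Type*} [CommSemiring R] {a b : ℕ → Ideal R} {n : ℕ}
    (hn : 1 ≤ n)
    (h : ∀ s r, 1 ≤ s → 1 ≤ r → ((∀ᶠ t in atTop, ¬ a (s * t) ≤ b (r * t)) ↔ n * s < r)) :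
    asymptoticResurgence a b = (((n : ℝ)⁻¹ : ℝ) : EReal) := by
  have hnR : (0 : ℝ) < n := by exact_mod_cast hn
  refine IsLUB.sSup_eq ⟨?_, fun ub hub => ?_⟩
  · rintro _ ⟨s, r, hs, hr, hev, rfl⟩
    have hnsr : (n * s : ℝ) < r := by exact_mod_cast (h s r hs hr).1 hev
    refine EReal.coe_le_coe_iff.2 ?_
    rw [div_le_iff₀ (Nat.cast_pos.2 hr), ← div_eq_inv_mul, le_div_iff₀ hnR]
    linarith
  · have hlim : Tendsto (fun s : ℕ => (((s : ℝ) / ((n * s + 1 : ℕ) : ℝ) : ℝ) : EReal)) atTop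
        (𝓝 (((n : ℝ)⁻¹ : ℝ) : EReal)) := by
      refine (continuous_coe_real_ereal.tendsto _).comp ?_
      have := (tendsto_natCast_div_add_atTop ((n : ℝ)⁻¹)).const_mul (n : ℝ)⁻¹
      rw [mul_one] at this
      refine this.congr fun s => ?_
      push_cast
      field_simp
    exact le_of_tendsto hlim ((eventually_ge_atTop 1).mono fun s hs =>
      hub ⟨s, n * s + 1, hs, by omega, (h _ _ hs (by omega)).2 (by omega), rfl⟩)

/-- from Example `ex.rhoTruncation`. Let `R` be a Noetherian domain and
`I ⊆ R` a nonzero proper ideal. Let `a_i = Iⁱ`, and `b_i = I` for `i ≠ 2`, `b_2 = I²`. Then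
for every `n ≥ 5`, `ρ̂(a_•, b_{n,•}) = 1/n`. -/
theorem asymptoticResurgence_truncation_example
    {R : Type*} [CommRing R] [IsDomain R] [IsNoetherianRing R]
    (I : Ideal R) (hI0 : I ≠ ⊥) (hI1 : I ≠ ⊤)
    (a b : ℕ → Ideal R)
    (hA : ∀ i : ℕ, a i = I ^ i)
    (hB : ∀ i : ℕ, 1 ≤ i → b i = if i = 2 then I ^ 2 else I) :
    ∀ n : ℕ, 5 ≤ n →
      asymptoticResurgence a (truncation b n) = (((n : ℝ)⁻¹ : ℝ) : EReal) := by
  intro n hn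
  refine asymptoticResurgence_eq_inv (by omega) fun s r hs hr => ?_
  have hlarge : ∀ t, 3 ≤ t → (¬ a (s * t) ≤ truncation b n (r * t) ↔ n * s < r) := by
    intro t ht
    have hrt : 3 ≤ r * t := le_mul_of_one_le_of_le hr ht
    rw [hA, truncation_eq_pow_truncationExponent (by omega) hB _ (by omega),
      (Ideal.pow_right_strictAnti_of_isNoetherianRing hI0 hI1).le_iff_ge, not_le,
      lt_truncationExponent_iff (by omega) (by omega), ← mul_assoc,
      Nat.mul_lt_mul_right (by omega)]
  rw [eventually_congr (eventually_atTop.2 ⟨3, hlarge⟩), eventually_const]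

end
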